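/- For the dichopile cost sequence defined by f_n = n + g_n, g_n = f_{⌊n/2⌋−1} + g_{⌈n/2⌉} for n ≥ 2, with f_0 = 0, f_1 = 1, g_0 = g_1 = 0, the sequence of backward differences u_n = f_n − f_{n−1} (with f_{−1} = 0) satisfies u_n = L·A_{n_{ℓ−1}}···A_{n_0}·C for every n ≥ 0, where L = (0,0,0,0,1,0), C = (1,0,0,0,0,0)^T, and A_0, A_1 are the explicit 6×6 matrices of the dichopile linear representation. -/
import Mathlib


open Matrix

/-- The auxiliary dichopile sequence `g`: `g₀ = g₁ = 0` and
`g_n = f_{⌊n/2⌋−1} + g_{⌈n/2⌉}` for `n ≥ 2`, where `f_m = m + g_m`. -/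
def dichoG : ℕ → ℤ
  | 0 => 0
  | 1 => 0
  | n + 2 =>
    (((n + 2) / 2 - 1 : ℕ) : ℤ) + dichoG ((n + 2) / 2 - 1) + dichoG ((n + 3) / 2)
decreasing_by all_goals omega

/-- The dichopile cost sequence `f_n = n + g_n` (so `f₀ = 0`, `f₁ = 1`). -/
def dichoF (n : ℕ) : ℤ := n + dichoG n

/-- The backward differences `u_n = f_n − f_{n−1}` (with `f_{−1} = 0`). -/
def dichoU (n : ℕ) : ℤ := dichoF n - if n = 0 then 0 else dichoF (n - 1)

/-- The two matrices of the dichopile linear representation. -/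
def dichoA : ℕ → Matrix (Fin 6) (Fin 6) ℝ
  | 0 => !![0,0,0,0,0,0; 1,0,0,1,0,0; 0,0,1,0,0,0; 0,1,0,0,0,0; 0,0,0,0,1,0; 1,1,0,0,0,1]
  | _ => !![0,0,1,0,0,0; 0,1,0,0,0,0; 1,0,0,1,0,0; 0,0,0,0,0,0; 1,0,0,0,1,1; 0,1,0,0,0,0]

section ConsEval
variable {α : Type*}
lemma c61 (a:α)(u:Fin 5→α): vecCons a u 1 = u 0 := rfl
lemma c62 (a:α)(u:Fin 5→α): vecCons a u 2 = u 1 := rfl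
lemma c63 (a:α)(u:Fin 5→α): vecCons a u 3 = u 2 := rfl
lemma c64 (a:α)(u:Fin 5→α): vecCons a u 4 = u 3 := rfl
lemma c65 (a:α)(u:Fin 5→α): vecCons a u 5 = u 4 := rfl
lemma c51 (a:α)(u:Fin 4→α): vecCons a u 1 = u 0 := rfl
lemma c52 (a:α)(u:Fin 4→α): vecCons a u 2 = u 1 := rfl
lemma c53 (a:α)(u:Fin 4→α): vecCons a u 3 = u 2 := rfl
lemma c54 (a:α)(u:Fin 4→α): vecCons a u 4 = u 3 := rfl
lemma c41 (a:α)(u:Fin 3→α): vecCons a u 1 = u 0 := rfl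
lemma c42 (a:α)(u:Fin 3→α): vecCons a u 2 = u 1 := rfl
lemma c43 (a:α)(u:Fin 3→α): vecCons a u 3 = u 2 := rfl
lemma c31 (a:α)(u:Fin 2→α): vecCons a u 1 = u 0 := rfl
lemma c32 (a:α)(u:Fin 2→α): vecCons a u 2 = u 1 := rfl
lemma c21 (a:α)(u:Fin 1→α): vecCons a u 1 = u 0 := rfl
end ConsEval

/- Recurrences of the dichopile sequences. -/

lemma dichoG_zero : dichoG 0 = 0 := by simp [dichoG]

lemma dichoG_one : dichoG 1 = 0 := by simp [dichoG]

lemma dichoG_even (k : ℕ) : dichoG (2*k+2) = k + dichoG k + dichoG (k+1) := by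
  have h1 : (2*k+2)/2 - 1 = k := by omega
  have h2 : (2*k+3)/2 = k+1 := by omega
  rw [show 2*k+2 = (2*k)+2 from rfl, dichoG]
  rw [show (2*k)+3 = 2*k+3 from rfl, h2, show (2*k)+2 = 2*k+2 from rfl, h1]

lemma dichoG_odd (k : ℕ) : dichoG (2*k+3) = k + dichoG k + dichoG (k+2) := by
  have h1 : (2*k+3)/2 - 1 = k := by omega
  have h2 : (2*k+4)/2 = k+2 := by omega
  rw [show 2*k+3 = (2*k+1)+2 from rfl, dichoG]
  rw [show (2*k+1)+2 = 2*k+3 from rfl, h1]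
  rw [show (2*k+1)+3 = 2*k+4 from rfl, h2]

lemma dichoU_succ (j : ℕ) : dichoU (j+1) = dichoF (j+1) - dichoF j := by
  simp [dichoU]

lemma dichoU_zero : dichoU 0 = 0 := by simp [dichoU, dichoF, dichoG_zero]

lemma dichoL4 (k : ℕ) : dichoG (2*k+2) - dichoG (2*k+1) = dichoU k := by
  cases k with
  | zero => simp [dichoG_even 0, dichoG_zero, dichoG_one, dichoU_zero]
  | succ j =>
      rw [dichoG_even (j+1), show 2*(j+1)+1 = 2*j+3 from by ring, dichoG_odd j,
        dichoU_succ, dichoF, dichoF]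
      push_cast
      ring

lemma dichoL1 (k : ℕ) : dichoU (2*k+2) = dichoU k + 1 := by
  rw [show 2*k+2 = (2*k+1)+1 from rfl, dichoU_succ, show (2*k+1)+1 = 2*k+2 from rfl,
    dichoF, dichoF, ← dichoL4 k]
  push_cast
  ring

lemma dichoL2 (k : ℕ) : dichoU (2*k+1) = (dichoG (k+1) - dichoG k) + 1 := by
  cases k with
  | zero =>
      rw [show 2*0+1 = 0+1 from rfl, dichoU_succ, dichoF, dichoF, dichoG_zero, dichoG_one]
      norm_num
  | succ j =>
      rw [show 2*(j+1)+1 = (2*j+2)+1 from by ring, dichoU_succ,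
        show (2*j+2)+1 = 2*j+3 from rfl, dichoF, dichoF, dichoG_odd j, dichoG_even j]
      push_cast
      ring

lemma dichoL3 (k : ℕ) : dichoU (2*k+3) = dichoU (k+2) := by
  rw [show 2*k+3 = (2*k+2)+1 from rfl, dichoU_succ, show (2*k+2)+1 = 2*k+3 from rfl,
    dichoF, dichoF, dichoG_odd k, dichoG_even k, dichoU_succ, dichoF, dichoF]
  push_cast
  ring

lemma dichoL5 (k : ℕ) : dichoG (2*k+3) - dichoG (2*k+2) = dichoU (k+2) - 1 := by
  rw [dichoG_odd k, dichoG_even k, dichoU_succ, dichoF, dichoF]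
  push_cast
  ring

lemma dichoU_one : dichoU 1 = 1 := by
  rw [show (1:ℕ) = 0+1 from rfl, dichoU_succ, dichoF, dichoF, dichoG_zero, dichoG_one]
  norm_num

lemma dichoU_two : dichoU 2 = 1 := by
  rw [show (2:ℕ) = 2*0+2 from rfl, dichoL1 0, dichoU_zero]
  norm_num

/-- The matrix product over the binary digits of `n`, most significant first. -/
def dichoP (n : ℕ) : Matrix (Fin 6) (Fin 6) ℝ :=
  ((Nat.digits 2 n).reverse.map dichoA).prod

lemma dichoP_zero : dichoP 0 = 1 := by simp [dichoP]

lemma dichoP_succ (n : ℕ) (h : 0 < n) : dichoP n = dichoP (n/2) * dichoA (n % 2) := by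
  unfold dichoP
  rw [Nat.digits_def' (by norm_num) h]
  simp

lemma vecMul_A0 (w : Fin 6 → ℝ) :
    w ᵥ* dichoA 0 = ![w 1 + w 5, w 3 + w 5, w 2, w 1, w 4, w 5] := by
  funext i
  fin_cases i <;>
    simp [dichoA, Matrix.vecMul, dotProduct, Fin.sum_univ_six,
      c61,c62,c63,c64,c65,c51,c52,c53,c54,c41,c42,c43,c31,c32,c21,
      Matrix.vecHead, Matrix.vecTail]

lemma vecMul_A1 (w : Fin 6 → ℝ) :
    w ᵥ* dichoA 1 = ![w 2 + w 4, w 1 + w 5, w 0, w 2, w 4, w 4] := by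
  funext i
  fin_cases i <;>
    simp [dichoA, Matrix.vecMul, dotProduct, Fin.sum_univ_six,
      c61,c62,c63,c64,c65,c51,c52,c53,c54,c41,c42,c43,c31,c32,c21,
      Matrix.vecHead, Matrix.vecTail]

/-- The generating-family description of `L · P(n)`. -/
lemma dichoKey : ∀ n : ℕ,
    (![0, 0, 0, 0, 1, 0] : Fin 6 → ℝ) ᵥ* dichoP n =
      ![(dichoU n : ℝ), if n = 0 then 0 else (dichoU (n-1) : ℝ),
        (dichoU (n+1) : ℝ) - 1, ((dichoG n - dichoG (n-1) : ℤ) : ℝ), 1,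
        if n = 0 then 0 else 1] := by
  intro n
  induction n using Nat.strong_induction_on with
  | _ n ih =>
    match n with
    | 0 =>
        rw [dichoP_zero, Matrix.vecMul_one]
        funext i
        fin_cases i <;>
          simp [dichoU_zero, dichoU_one, dichoG_zero,
            c61,c62,c63,c64,c65,c51,c52,c53,c54,c41,c42,c43,c31,c32,c21]
    | 1 =>
        rw [dichoP_succ 1 (by norm_num), show (1:ℕ)/2 = 0 from rfl,
          show (1:ℕ) % 2 = 1 from rfl, ← Matrix.vecMul_vecMul, ih 0 (by norm_num),
          vecMul_A1]
        funext i
        fin_cases i <;>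
          simp [dichoU_zero, dichoU_one, dichoU_two, dichoG_zero, dichoG_one,
            c61,c62,c63,c64,c65,c51,c52,c53,c54,c41,c42,c43,c31,c32,c21]
    | (n+2) =>
        obtain ⟨k, hk | hk⟩ := Nat.even_or_odd' n <;> subst hk
        · -- n + 2 = 2k + 2
          have hdiv : (2*k+2)/2 = k+1 := by omega
          have hmod : (2*k+2) % 2 = 0 := by omega
          rw [dichoP_succ (2*k+2) (by omega), hdiv, hmod, ← Matrix.vecMul_vecMul,
            ih (k+1) (by omega), vecMul_A0]
          have e1 : 2*k+2-1 = 2*k+1 := by omega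
          have e2 : k+1-1 = k := by omega
          rw [e1]
          funext i
          fin_cases i <;>
            simp [e2, dichoL1, dichoL2, dichoL3, dichoL4,
              show 2*k+2+1 = 2*k+3 from rfl,
              c61,c62,c63,c64,c65,c51,c52,c53,c54,c41,c42,c43,c31,c32,c21] <;>
            push_cast <;> ring
        · -- n + 2 = 2k + 3
          have hdiv : (2*k+1+2)/2 = k+1 := by omega
          have hmod : (2*k+1+2) % 2 = 1 := by omega
          rw [dichoP_succ (2*k+1+2) (by omega), hdiv, hmod, ← Matrix.vecMul_vecMul,
            ih (k+1) (by omega), vecMul_A1]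
          have e0 : 2*k+1+2 = 2*k+3 := by omega
          have e1 : 2*k+3-1 = 2*k+2 := by omega
          have e2 : k+1-1 = k := by omega
          have h24 : dichoU (2*k+4) = dichoU (k+1) + 1 := by
            rw [show 2*k+4 = 2*(k+1)+2 from by ring, dichoL1 (k+1)]
          rw [e0, e1]
          funext i
          fin_cases i <;>
            simp [e2, dichoL1, dichoL3, dichoL5, h24,
              show 2*k+3+1 = 2*k+4 from rfl,
              c61,c62,c63,c64,c65,c51,c52,c53,c54,c41,c42,c43,c31,c32,c21] <;>
            push_cast <;> ring

/-- the backward differences of the dichopile cost satisfy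
`u_n = L·A_{n_{ℓ−1}}⋯A_{n_0}·C`, reading the binary digits of `n`
most significant first, with `L = (0,0,0,0,1,0)` and `C = (1,0,0,0,0,0)ᵀ`. -/
theorem dichopile_linear_representation :
    ∀ n : ℕ, (dichoU n : ℝ) =
      ![0, 0, 0, 0, 1, 0] ⬝ᵥ
        (((Nat.digits 2 n).reverse.map dichoA).prod *ᵥ ![1, 0, 0, 0, 0, 0]) := by
  intro n
  rw [Matrix.dotProduct_mulVec, show ((Nat.digits 2 n).reverse.map dichoA).prod = dichoP n from rfl,
    dichoKey n]
  simp [dotProduct, Fin.sum_univ_six,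
    c61,c62,c63,c64,c65,c51,c52,c53,c54,c41,c42,c43,c31,c32,c21]
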